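/- Let θ be a real 2×2 matrix, η ∈ ℝ², and φ : [0,T] → ℝ continuous. Define z(t) = ∫₀^t cos φ(s) ds and w(t) = ∫₀^t sin φ(s)·exp(z(s)θ)η ds. Set φ₂(t) := φ(T-t) + π and define z₂, w₂ analogously from φ₂. Then z₂(t) = z(T-t) - z(T) and w₂(t) = exp(-z(T)θ)(w(T-t) - w(T)) for all t ∈ [0,T]. -/

import Mathlib

open Real

/-- The horizontal `ℝ`-component: `z(t) = ∫₀^t cos φ(s) ds`. -/
noncomputable def zComp (φ : ℝ → ℝ) (t : ℝ) : ℝ :=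
  ∫ s in (0 : ℝ)..t, cos (φ s)

/-- The horizontal `ℝ²`-component: `w(t) = ∫₀^t sin φ(s) · exp(z(s)θ)η ds`. -/
noncomputable def wComp (θ : Matrix (Fin 2) (Fin 2) ℝ) (η : Fin 2 → ℝ)
    (φ : ℝ → ℝ) (t : ℝ) : Fin 2 → ℝ :=
  ∫ s in (0 : ℝ)..t, sin (φ s) • (NormedSpace.exp (zComp φ s • θ)).mulVec η

/-!
Reversing time and adding `π` flips the sign of `cos φ` and `sin φ`, so after the substitution
`s ↦ T - s` each integral from `0` to `t` becomes minus the integral from `T - t` to `T`, i.e. a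
difference of values of the original primitive. For `w` one more ingredient is needed: since
`z₂(s) = z(T - s) - z(T)` and all multiples of `θ` commute, `exp(z₂(s)θ) = exp(-z(T)θ) exp(z(T - s)θ)`,
and the constant factor `exp(-z(T)θ)` comes out of the integral.
-/

open MeasureTheory
open scoped Matrix

theorem intervalIntegral.integral_comp_sub_left_eq_sub {E : Type*} [NormedAddCommGroup E]
    [NormedSpace ℝ E] {f : ℝ → E} {T t : ℝ} (hT : IntervalIntegrable f volume 0 T)
    (hTt : IntervalIntegrable f volume 0 (T - t)) :
    ∫ s in (0 : ℝ)..t, f (T - s) = (∫ s in (0 : ℝ)..T, f s) - ∫ s in (0 : ℝ)..T - t, f s := by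
  rw [intervalIntegral.integral_comp_sub_left, sub_zero,
    intervalIntegral.integral_interval_sub_left hT hTt]

namespace Matrix

theorem intervalIntegral_mulVec {m n : Type*} [Fintype m] [Fintype n]
    (A : Matrix m n ℝ) {f : ℝ → n → ℝ} {a b : ℝ} (hf : IntervalIntegrable f volume a b) :
    ∫ x in a..b, A *ᵥ f x = A *ᵥ ∫ x in a..b, f x :=
  (LinearMap.toContinuousLinearMap A.mulVecLin).intervalIntegral_comp_comm hf

variable {m : Type*} [Fintype m] [DecidableEq m]

theorem continuous_exp {𝕜 : Type*} [RCLike 𝕜] :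
    Continuous (NormedSpace.exp : Matrix m m 𝕜 → Matrix m m 𝕜) :=
  open scoped Norms.Operator in NormedSpace.exp_continuous

theorem exp_sub_smul {𝔸 R : Type*} [NormedRing 𝔸] [NormedAlgebra ℚ 𝔸] [CompleteSpace 𝔸]
    [CommRing R] [Algebra R 𝔸] (a b : R) (A : Matrix m m 𝔸) :
    NormedSpace.exp ((a - b) • A) = NormedSpace.exp ((-b) • A) * NormedSpace.exp (a • A) := by
  rw [← exp_add_of_commute _ _ (((Commute.refl A).smul_left _).smul_right _), ← add_smul,
    neg_add_eq_sub]

end Matrix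

section HorizontalSymmetry

variable {φ : ℝ → ℝ}

theorem continuous_zComp (hφ : Continuous φ) : Continuous (zComp φ) :=
  intervalIntegral.continuous_primitive
    (fun _ _ => (continuous_cos.comp hφ).intervalIntegrable _ _) 0

theorem zComp_reflect (hφ : Continuous φ) (T t : ℝ) :
    zComp (fun s => φ (T - s) + π) t = zComp φ (T - t) - zComp φ T := by
  have hcos (a b : ℝ) : IntervalIntegrable (fun s => cos (φ s)) volume a b :=
    (continuous_cos.comp hφ).intervalIntegrable a b
  simp only [zComp, cos_add_pi, intervalIntegral.integral_neg,
    intervalIntegral.integral_comp_sub_left_eq_sub (hcos 0 T) (hcos 0 (T - t)), neg_sub]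

theorem continuous_wComp_integrand (θ : Matrix (Fin 2) (Fin 2) ℝ) (η : Fin 2 → ℝ)
    (hφ : Continuous φ) :
    Continuous fun s => sin (φ s) • NormedSpace.exp (zComp φ s • θ) *ᵥ η :=
  (continuous_sin.comp hφ).smul <|
    (Matrix.continuous_exp.comp ((continuous_zComp hφ).smul continuous_const)).matrix_mulVec
      continuous_const

theorem wComp_reflect (θ : Matrix (Fin 2) (Fin 2) ℝ) (η : Fin 2 → ℝ) (hφ : Continuous φ)
    (T t : ℝ) :
    wComp θ η (fun s => φ (T - s) + π) t
      = NormedSpace.exp ((-(zComp φ T)) • θ) *ᵥ (wComp θ η φ (T - t) - wComp θ η φ T) := by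
  set g := fun s => sin (φ s) • NormedSpace.exp (zComp φ s • θ) *ᵥ η
  have hgc : Continuous g := continuous_wComp_integrand θ η hφ
  have hg (a b : ℝ) : IntervalIntegrable g volume a b := hgc.intervalIntegrable a b
  have hintegrand (s : ℝ) :
      sin (φ (T - s) + π) • NormedSpace.exp (zComp (fun s => φ (T - s) + π) s • θ) *ᵥ η
        = NormedSpace.exp ((-(zComp φ T)) • θ) *ᵥ -g (T - s) := by
    rw [zComp_reflect hφ, Matrix.exp_sub_smul, sin_add_pi, ← Matrix.mulVec_mulVec,
      Matrix.mulVec_neg, Matrix.mulVec_smul, neg_smul]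
  calc wComp θ η (fun s => φ (T - s) + π) t
      = ∫ s in (0 : ℝ)..t, NormedSpace.exp ((-(zComp φ T)) • θ) *ᵥ -g (T - s) := by
        simp only [wComp, hintegrand]
    _ = NormedSpace.exp ((-(zComp φ T)) • θ) *ᵥ -∫ s in (0 : ℝ)..t, g (T - s) := by
        rw [Matrix.intervalIntegral_mulVec, intervalIntegral.integral_neg]
        exact (hgc.comp (continuous_sub_left T)).neg.intervalIntegrable 0 t
    _ = _ := by
        rw [intervalIntegral.integral_comp_sub_left_eq_sub (hg 0 T) (hg 0 (T - t)), neg_sub]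
        rfl

end HorizontalSymmetry

theorem symmetry_eps2_horizontal_general (θ : Matrix (Fin 2) (Fin 2) ℝ) (η : Fin 2 → ℝ)
    (T : ℝ) (φ : ℝ → ℝ) (hφ : Continuous φ) :
    ∀ t ∈ Set.Icc 0 T,
      zComp (fun s => φ (T - s) + π) t = zComp φ (T - t) - zComp φ T ∧
      wComp θ η (fun s => φ (T - s) + π) t
        = (NormedSpace.exp ((-(zComp φ T)) • θ)).mulVec
            (wComp θ η φ (T - t) - wComp θ η φ T) :=
  fun t _ => ⟨zComp_reflect hφ T t, wComp_reflect θ η hφ T t⟩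

/-- Under the symmetry `ε₂`, `φ₂(t) = φ(T - t) + π`, the horizontal components
satisfy `z₂(t) = z(T - t) - z(T)` and `w₂(t) = exp(-z(T)θ)(w(T - t) - w(T))` for
`t ∈ [0, T]`. -/
theorem symmetry_eps2_horizontal (θ : Matrix (Fin 2) (Fin 2) ℝ) (η : Fin 2 → ℝ)
    (T : ℝ) (hT : 0 ≤ T) (φ : ℝ → ℝ) (hφ : Continuous φ) :
    ∀ t ∈ Set.Icc 0 T,
      zComp (fun s => φ (T - s) + π) t = zComp φ (T - t) - zComp φ T ∧
      wComp θ η (fun s => φ (T - s) + π) t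
        = (NormedSpace.exp ((-(zComp φ T)) • θ)).mulVec
            (wComp θ η φ (T - t) - wComp θ η φ T) :=
  symmetry_eps2_horizontal_general θ η T φ hφ
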